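/- arXiv:1302.1299 — 4 statements merged into one kernel-verified Lean document; each statement's English description precedes it below -/
import Mathlib

section
/- Let $\gamma\ge 2$. Then for all $\rho\ge 0$: $h(\rho)\ge \frac{|\rho-1|^\gamma}{\gamma(\gamma-1)}$; equivalently, $\rho^\gamma-1-\gamma(\rho-1)-|\rho-1|^\gamma\ge 0$ for all $\rho\ge 0$. -/
noncomputable section

/-- Internal energy `h(ρ) = (ρ^γ - 1 - γ(ρ-1)) / (γ(γ-1))` (real powers). -/
def hfun (γ ρ : ℝ) : ℝ := (ρ ^ γ - 1 - γ * (ρ - 1)) / (γ * (γ - 1))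

/-!
Subtracting the affine part and `|ρ - 1|^γ` leaves a function of `ρ` that vanishes at `ρ = 1`,
is nondecreasing on `[1, ∞)` and nonincreasing on `[0, 1]`. On both sides the sign of the
derivative reduces to the superadditivity `a^p + b^p ≤ (a + b)^p` of `t ↦ t^p` for `p = γ - 1 ≥ 1`,
applied to `(ρ - 1) + 1 = ρ` and to `ρ + (1 - ρ) = 1` respectively.
-/

open Set

section
variable {γ : ℝ}

lemma hasDerivAt_rpow_sub_mul_sub_rpow_sub_one (hγ : 1 ≤ γ) (x : ℝ) :
    HasDerivAt (fun y : ℝ => y ^ γ - γ * y - (y - 1) ^ γ)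
      (γ * (x ^ (γ - 1) - 1 - (x - 1) ^ (γ - 1))) x := by
  have hpow := Real.hasDerivAt_rpow_const (x := x) (Or.inr hγ)
  have hshift := (Real.hasDerivAt_rpow_const (x := x - 1) (Or.inr hγ)).comp x
    ((hasDerivAt_id x).sub_const 1)
  exact ((hpow.sub ((hasDerivAt_id x).const_mul γ)).sub hshift).congr_deriv (by ring)

lemma hasDerivAt_rpow_sub_mul_sub_rpow_one_sub (hγ : 1 ≤ γ) (x : ℝ) :
    HasDerivAt (fun y : ℝ => y ^ γ - γ * y - (1 - y) ^ γ)
      (γ * (x ^ (γ - 1) - 1 + (1 - x) ^ (γ - 1))) x := by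
  have hpow := Real.hasDerivAt_rpow_const (x := x) (Or.inr hγ)
  have hreflect := (Real.hasDerivAt_rpow_const (x := 1 - x) (Or.inr hγ)).comp x
    ((hasDerivAt_id x).const_sub 1)
  exact ((hpow.sub ((hasDerivAt_id x).const_mul γ)).sub hreflect).congr_deriv (by ring)

lemma monotoneOn_rpow_sub_mul_sub_rpow_sub_one (hγ : 2 ≤ γ) :
    MonotoneOn (fun y : ℝ => y ^ γ - γ * y - (y - 1) ^ γ) (Ici 1) := by
  have hderiv := hasDerivAt_rpow_sub_mul_sub_rpow_sub_one (by linarith : (1 : ℝ) ≤ γ)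
  refine monotoneOn_of_hasDerivWithinAt_nonneg (convex_Ici 1)
    (fun x _ => (hderiv x).continuousAt.continuousWithinAt)
    (fun x _ => (hderiv x).hasDerivWithinAt) fun x hx => ?_
  rw [interior_Ici, mem_Ioi] at hx
  have hsuper : (x - 1) ^ (γ - 1) + 1 ^ (γ - 1) ≤ (x - 1 + 1) ^ (γ - 1) :=
    Real.add_rpow_le_rpow_add (by linarith) zero_le_one (by linarith)
  rw [Real.one_rpow, sub_add_cancel] at hsuper
  exact mul_nonneg (by linarith) (by linarith)

lemma antitoneOn_rpow_sub_mul_sub_rpow_one_sub (hγ : 2 ≤ γ) :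
    AntitoneOn (fun y : ℝ => y ^ γ - γ * y - (1 - y) ^ γ) (Icc 0 1) := by
  have hderiv := hasDerivAt_rpow_sub_mul_sub_rpow_one_sub (by linarith : (1 : ℝ) ≤ γ)
  refine antitoneOn_of_hasDerivWithinAt_nonpos (convex_Icc 0 1)
    (fun x _ => (hderiv x).continuousAt.continuousWithinAt)
    (fun x _ => (hderiv x).hasDerivWithinAt) fun x hx => ?_
  rw [interior_Icc, mem_Ioo] at hx
  have hsuper : x ^ (γ - 1) + (1 - x) ^ (γ - 1) ≤ (x + (1 - x)) ^ (γ - 1) :=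
    Real.add_rpow_le_rpow_add hx.1.le (by linarith) (by linarith)
  rw [add_sub_cancel, Real.one_rpow] at hsuper
  exact mul_nonpos_of_nonneg_of_nonpos (by linarith) (by linarith)

lemma abs_sub_one_rpow_le (hγ : 2 ≤ γ) {ρ : ℝ} (hρ : 0 ≤ ρ) :
    |ρ - 1| ^ γ ≤ ρ ^ γ - 1 - γ * (ρ - 1) := by
  have hzero : (0 : ℝ) ^ γ = 0 := Real.zero_rpow (by linarith)
  rcases le_total ρ 1 with hle | hge
  · have h := antitoneOn_rpow_sub_mul_sub_rpow_one_sub hγ ⟨hρ, hle⟩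
      (right_mem_Icc.2 zero_le_one) hle
    simp only [Real.one_rpow, sub_self, hzero] at h
    rw [abs_of_nonpos (by linarith), neg_sub]
    linarith
  · have h := monotoneOn_rpow_sub_mul_sub_rpow_sub_one hγ (mem_Ici.2 le_rfl) hge hge
    simp only [Real.one_rpow, sub_self, hzero] at h
    rw [abs_of_nonneg (by linarith)]
    linarith

end

/-- For `γ ≥ 2` and all `ρ ≥ 0`: `h(ρ) ≥ |ρ-1|^γ/(γ(γ-1))`, equivalently
`ρ^γ - 1 - γ(ρ-1) - |ρ-1|^γ ≥ 0`. -/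
theorem stmt_6 (γ : ℝ) (hγ : 2 ≤ γ) :
    ∀ ρ : ℝ, 0 ≤ ρ →
      hfun γ ρ ≥ |ρ - 1| ^ γ / (γ * (γ - 1)) ∧
      ρ ^ γ - 1 - γ * (ρ - 1) - |ρ - 1| ^ γ ≥ 0 := by
  intro ρ hρ
  have key := abs_sub_one_rpow_le hγ hρ
  have hpos : 0 < γ * (γ - 1) := by nlinarith
  exact ⟨div_le_div_of_nonneg_right key hpos.le, sub_nonneg.2 key⟩
end
end

section
/- Let $\gamma\ge 4$. Then for all $z\ge 0$: $h(1+z)\ge \frac{z^2(1+z)^{\gamma-2}}{\gamma(\gamma-1)}$; equivalently, the function $w(z)=h(1+z)-\frac{z^2(1+z)^{\gamma-2}}{\gamma(\gamma-1)}$ is nonnegative on $[0,\infty)$. -/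
noncomputable section

/-- For `γ ≥ 4` and all `z ≥ 0`: `h(1+z) ≥ z²(1+z)^(γ-2)/(γ(γ-1))`, i.e. the
function `w(z) = h(1+z) - z²(1+z)^(γ-2)/(γ(γ-1))` is nonnegative on `[0,∞)`. -/
theorem stmt_7 (γ : ℝ) (hγ : 4 ≤ γ) :
    ∀ z : ℝ, 0 ≤ z →
      hfun γ (1 + z) ≥ z ^ 2 * (1 + z) ^ (γ - 2) / (γ * (γ - 1)) ∧
      0 ≤ hfun γ (1 + z) - z ^ 2 * (1 + z) ^ (γ - 2) / (γ * (γ - 1)) := by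
  intro z hz
  have hpos : (0:ℝ) < 1 + z := by linarith
  have hden : (0:ℝ) < γ * (γ - 1) := by nlinarith
  -- split (1+z)^γ
  have hsplit : (1 + z) ^ γ = (1 + z) ^ (γ - 2) * (1 + z) ^ 2 := by
    rw [← Real.rpow_natCast (1 + z) 2, ← Real.rpow_add hpos]
    norm_num
  -- Bernoulli
  have hbern : 1 + (γ - 2) * z ≤ (1 + z) ^ (γ - 2) := by
    have := one_add_mul_self_le_rpow_one_add (s := z) (by linarith) (p := γ - 2)
      (by linarith)
    linarith [this]
  have hkey : z ^ 2 * (1 + z) ^ (γ - 2) ≤ (1 + z) ^ γ - 1 - γ * (1 + z - 1) := by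
    rw [hsplit]
    have h1 : (1 + z) ^ (γ - 2) * ((1 + z) ^ 2 - z ^ 2) = (1 + z) ^ (γ - 2) * (1 + 2 * z) := by
      ring
    have h2 : (1 + (γ - 2) * z) * (1 + 2 * z) ≤ (1 + z) ^ (γ - 2) * (1 + 2 * z) := by
      apply mul_le_mul_of_nonneg_right hbern (by linarith)
    nlinarith
  have main : z ^ 2 * (1 + z) ^ (γ - 2) / (γ * (γ - 1)) ≤ hfun γ (1 + z) := by
    unfold hfun
    exact div_le_div_of_nonneg_right hkey hden.le |>.trans_eq rfl
  exact ⟨main, by linarith⟩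
end
end

section
/- Let $\gamma>1$. Then there exists a constant $C>0$ such that for all $\rho\ge 0$: $\big|2h(\rho)-(\rho-1)^2\big|\le C\,|\rho-1|^3\,\big(1+\rho^{(\gamma-3)^+}\big)$, where $(\gamma-3)^+=\max\{\gamma-3,0\}$. -/
/-!
Put `g ρ = ρ^γ - 1 - γ(ρ-1) - γ(γ-1)/2 (ρ-1)²`, so that `2h(ρ) - (ρ-1)² = 2 g(ρ) / (γ(γ-1))`.
The function `g` and its first two derivatives vanish at `1`, and `g''' t = γ(γ-1)(γ-2) t^(γ-3)`.
For `ρ ≥ 1/2`, three mean value inequalities on `[[1, ρ]]` bound `|g ρ|` by `|ρ-1|³` times the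
supremum of `|g'''|` there, and `t^(γ-3) ≤ 4 (1 + ρ^(γ-3)⁺)` on `[[1, ρ]] ⊆ [1/2, max 1 ρ]`.
For `ρ < 1/2` the left-hand side is bounded by a constant while `|ρ-1|³ ≥ 1/8`.
-/

noncomputable section

open Set

lemma abs_le_mul_abs_sub_pow_succ_of_hasDerivAt {f f' : ℝ → ℝ} {a b K : ℝ} {n : ℕ}
    (hK : 0 ≤ K) (hf : ∀ x ∈ uIcc a b, HasDerivAt f (f' x) x) (hfa : f a = 0)
    (hf' : ∀ x ∈ uIcc a b, |f' x| ≤ K * |x - a| ^ n) :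
    ∀ x ∈ uIcc a b, |f x| ≤ K * |x - a| ^ (n + 1) := by
  intro x hx
  have hsub : uIcc a x ⊆ uIcc a b := uIcc_subset_uIcc_left hx
  have hbound : ∀ t ∈ uIcc a x, ‖f' t‖ ≤ K * |x - a| ^ n := fun t ht =>
    (hf' t (hsub ht)).trans <|
      mul_le_mul_of_nonneg_left (pow_le_pow_left₀ (abs_nonneg _) (abs_sub_left_of_mem_uIcc ht) n) hK
  have := (convex_uIcc a x).norm_image_sub_le_of_norm_hasDerivWithin_le
    (fun t ht => (hf t (hsub ht)).hasDerivWithinAt) hbound left_mem_uIcc right_mem_uIcc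
  rw [hfa, sub_zero, Real.norm_eq_abs, Real.norm_eq_abs] at this
  rwa [pow_succ, ← mul_assoc]

lemma rpow_le_four_mul_of_mem_uIcc {p ρ t : ℝ} (hρ : 1 / 2 ≤ ρ) (hp : -2 ≤ p)
    (ht : t ∈ uIcc 1 ρ) : t ^ p ≤ 4 * (1 + ρ ^ max p 0) := by
  have ht₀ : 1 / 2 ≤ t := le_trans (le_min (by norm_num) hρ) ht.1
  have hρp : 0 ≤ ρ ^ max p 0 := Real.rpow_nonneg (by linarith) _
  rcases le_total 0 p with hp₀ | hp₀
  · have : t ^ p ≤ 1 + ρ ^ p := by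
      rcases le_max_iff.mp ht.2 with ht₁ | htρ
      · linarith [Real.rpow_le_one (by linarith) ht₁ hp₀, Real.rpow_nonneg (by linarith : 0 ≤ ρ) p]
      · linarith [Real.rpow_le_rpow (by linarith) htρ hp₀]
    rw [max_eq_left hp₀] at hρp ⊢
    linarith
  · have : t ^ p ≤ 4 := calc
      t ^ p ≤ (1 / 2) ^ p := Real.rpow_le_rpow_of_nonpos (by norm_num) ht₀ hp₀
      _ = 2 ^ (-p) := by rw [one_div, Real.inv_rpow zero_le_two, Real.rpow_neg zero_le_two]
      _ ≤ 2 ^ (2 : ℝ) := Real.rpow_le_rpow_of_exponent_le one_le_two (by linarith)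
      _ = 4 := by norm_num
    linarith

lemma abs_rpow_sub_taylor_two_le {γ ρ M : ℝ} (hρ : 0 < ρ)
    (hM : ∀ t ∈ uIcc 1 ρ, t ^ (γ - 3) ≤ M) :
    |ρ ^ γ - 1 - γ * (ρ - 1) - γ * (γ - 1) / 2 * (ρ - 1) ^ 2| ≤
      |γ * (γ - 1) * (γ - 2)| * M * |ρ - 1| ^ 3 := by
  have hpos : ∀ t ∈ uIcc 1 ρ, 0 < t := fun t ht => lt_of_lt_of_le (lt_min one_pos hρ) ht.1
  have hrpow (p : ℝ) {t : ℝ} (ht : t ∈ uIcc 1 ρ) :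
      HasDerivAt (fun x : ℝ => x ^ p) (p * t ^ (p - 1)) t :=
    Real.hasDerivAt_rpow_const (Or.inl (hpos t ht).ne')
  have hK : 0 ≤ |γ * (γ - 1) * (γ - 2)| * M :=
    mul_nonneg (abs_nonneg _) (zero_le_one.trans (by simpa using hM 1 left_mem_uIcc))
  have h₁ := abs_le_mul_abs_sub_pow_succ_of_hasDerivAt (n := 0)
    (f := fun t => γ * (γ - 1) * (t ^ (γ - 2) - 1))
    (f' := fun t => γ * (γ - 1) * (γ - 2) * t ^ (γ - 3)) hK
    (fun t ht => (((hrpow (γ - 2) ht).sub_const 1).const_mul (γ * (γ - 1))).congr_deriv <| by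
      rw [show γ - 2 - 1 = γ - 3 by ring]; ring)
    (by simp)
    (fun t ht => by
      rw [abs_mul, pow_zero, mul_one, abs_of_nonneg (Real.rpow_nonneg (hpos t ht).le _)]
      exact mul_le_mul_of_nonneg_left (hM t ht) (abs_nonneg _))
  have h₂ := abs_le_mul_abs_sub_pow_succ_of_hasDerivAt (n := 1)
    (f := fun t => γ * t ^ (γ - 1) - γ - γ * (γ - 1) * (t - 1)) hK
    (fun t ht => ((((hrpow (γ - 1) ht).const_mul γ).sub_const γ).sub
      (((hasDerivAt_id t).sub_const 1).const_mul (γ * (γ - 1)))).congr_deriv <| by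
        rw [show γ - 1 - 1 = γ - 2 by ring]; ring)
    (by simp) h₁
  have h₃ := abs_le_mul_abs_sub_pow_succ_of_hasDerivAt (n := 2)
    (f := fun t => t ^ γ - 1 - γ * (t - 1) - γ * (γ - 1) / 2 * (t - 1) ^ 2) hK
    (fun t ht => ((((hrpow γ ht).sub_const 1).sub
      (((hasDerivAt_id t).sub_const 1).const_mul γ)).sub
      ((((hasDerivAt_id t).sub_const 1).pow 2).const_mul (γ * (γ - 1) / 2))).congr_deriv <| by
        simp only [id]; push_cast; ring)
    (by simp) h₂
  exact h₃ ρ right_mem_uIcc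

lemma two_mul_hfun_sub_sq {γ : ℝ} (hγ₀ : γ ≠ 0) (hγ₁ : γ - 1 ≠ 0) (ρ : ℝ) :
    2 * hfun γ ρ - (ρ - 1) ^ 2 =
      2 / (γ * (γ - 1)) * (ρ ^ γ - 1 - γ * (ρ - 1) - γ * (γ - 1) / 2 * (ρ - 1) ^ 2) := by
  rw [hfun]
  field_simp

lemma abs_two_mul_hfun_sub_sq_le_of_half_le {γ ρ : ℝ} (hγ : 1 < γ) (hρ : 1 / 2 ≤ ρ) :
    |2 * hfun γ ρ - (ρ - 1) ^ 2| ≤ 8 * |γ - 2| * |ρ - 1| ^ 3 * (1 + ρ ^ max (γ - 3) 0) := by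
  have hγγ : 0 < γ * (γ - 1) := mul_pos (by linarith) (by linarith)
  have htaylor := abs_rpow_sub_taylor_two_le (by linarith) fun t ht =>
    rpow_le_four_mul_of_mem_uIcc (p := γ - 3) hρ (by linarith) ht
  have hγ₀ : γ ≠ 0 := by linarith
  have hγ₁ : γ - 1 ≠ 0 := by linarith
  rw [two_mul_hfun_sub_sq hγ₀ hγ₁, abs_mul, abs_of_pos (by positivity : 0 < 2 / (γ * (γ - 1)))]
  calc 2 / (γ * (γ - 1)) * |ρ ^ γ - 1 - γ * (ρ - 1) - γ * (γ - 1) / 2 * (ρ - 1) ^ 2|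
      ≤ 2 / (γ * (γ - 1)) *
          (|γ * (γ - 1) * (γ - 2)| * (4 * (1 + ρ ^ max (γ - 3) 0)) * |ρ - 1| ^ 3) := by
        gcongr
    _ = 8 * |γ - 2| * |ρ - 1| ^ 3 * (1 + ρ ^ max (γ - 3) 0) := by
        rw [abs_mul, abs_of_pos hγγ]
        field_simp
        ring

lemma abs_two_mul_hfun_sub_sq_le_of_le_one {γ ρ : ℝ} (hγ : 1 < γ) (hρ₀ : 0 ≤ ρ) (hρ₁ : ρ ≤ 1) :
    |2 * hfun γ ρ - (ρ - 1) ^ 2| ≤ 2 * (1 + γ) / (γ * (γ - 1)) + 1 := by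
  have hγγ : 0 < γ * (γ - 1) := mul_pos (by linarith) (by linarith)
  have hpow₀ : 0 ≤ ρ ^ γ := Real.rpow_nonneg hρ₀ γ
  have hpow₁ : ρ ^ γ ≤ 1 := Real.rpow_le_one hρ₀ hρ₁ (by linarith)
  have hnum : |ρ ^ γ - 1 - γ * (ρ - 1)| ≤ 1 + γ := by
    rw [abs_le]; constructor <;> nlinarith
  have hsq : |(ρ - 1) ^ 2| ≤ 1 := by
    rw [abs_of_nonneg (sq_nonneg _)]; nlinarith
  calc |2 * hfun γ ρ - (ρ - 1) ^ 2| ≤ |2 * hfun γ ρ| + |(ρ - 1) ^ 2| := abs_sub _ _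
    _ = 2 * |ρ ^ γ - 1 - γ * (ρ - 1)| / (γ * (γ - 1)) + |(ρ - 1) ^ 2| := by
        rw [hfun, abs_mul, abs_div, abs_of_pos hγγ, abs_two, mul_div_assoc]
    _ ≤ 2 * (1 + γ) / (γ * (γ - 1)) + 1 := by gcongr

/-- For `γ > 1` there is `C > 0` with
`|2h(ρ) - (ρ-1)²| ≤ C |ρ-1|³ (1 + ρ^((γ-3)⁺))` for all `ρ ≥ 0`. -/
theorem stmt_10 (γ : ℝ) (hγ : 1 < γ) :
    ∃ C > 0, ∀ ρ : ℝ, 0 ≤ ρ →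
      |2 * hfun γ ρ - (ρ - 1) ^ 2| ≤ C * |ρ - 1| ^ 3 * (1 + ρ ^ max (γ - 3) 0) := by
  set D := 2 * (1 + γ) / (γ * (γ - 1)) + 1
  have hD : 0 < D := by have : 0 < γ * (γ - 1) := mul_pos (by linarith) (by linarith); positivity
  refine ⟨8 * (|γ - 2| + D), by positivity, fun ρ hρ => ?_⟩
  have hP : 1 ≤ 1 + ρ ^ max (γ - 3) 0 := le_add_of_nonneg_right (Real.rpow_nonneg hρ _)
  rcases le_or_gt (1 / 2) ρ with hρ' | hρ'
  · refine (abs_two_mul_hfun_sub_sq_le_of_half_le hγ hρ').trans ?_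
    gcongr
    linarith
  · have hcube : 1 / 8 ≤ |ρ - 1| ^ 3 := calc
      (1 / 8 : ℝ) = (1 / 2) ^ 3 := by norm_num
      _ ≤ |ρ - 1| ^ 3 := by gcongr; rw [abs_of_neg (by linarith)]; linarith
    calc |2 * hfun γ ρ - (ρ - 1) ^ 2| ≤ D :=
          abs_two_mul_hfun_sub_sq_le_of_le_one hγ hρ (by linarith)
      _ ≤ 8 * (|γ - 2| + D) * |ρ - 1| ^ 3 * (1 + ρ ^ max (γ - 3) 0) := by
          nlinarith [abs_nonneg (γ - 2), mul_le_mul hcube hP zero_le_one (by positivity)]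
end
end

section
/- Let $s>0$, let $\sigma(\rho)=\rho^s$, and let $S(\rho)=\frac{s}{2}\rho^{2s}$ (so that $S'(\rho)=\rho\,\sigma'(\rho)^2$). Then for every smooth function $\rho:\mathbb{R}^2\to(0,\infty)$ the pointwise identity $\rho\,\nabla\big(\sigma'(\rho)\Delta\sigma(\rho)\big)=\operatorname{div}\Big(\big(\Delta S(\rho)-\tfrac12 S''(\rho)|\nabla\rho|^2\big)\mathbb{I}-\nabla\sigma(\rho)\otimes\nabla\sigma(\rho)\Big)$ holds on $\mathbb{R}^2$, where $\mathbb{I}$ is the $2\times 2$ identity matrix and the divergence of a matrix field is taken row-wise. -/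
noncomputable section

/-- Partial derivative in the first variable of `f : ℝ² → ℝ` (curried). -/
def pd1 (f : ℝ → ℝ → ℝ) : ℝ → ℝ → ℝ := fun x y => deriv (fun s => f s y) x

/-- Partial derivative in the second variable. -/
def pd2 (f : ℝ → ℝ → ℝ) : ℝ → ℝ → ℝ := fun x y => deriv (fun s => f x s) y

/-- Laplacian of `f : ℝ² → ℝ`. -/
def lapl (f : ℝ → ℝ → ℝ) : ℝ → ℝ → ℝ := fun x y => pd1 (pd1 f) x y + pd2 (pd2 f) x y

/-- Smoothness of a curried function on `ℝ²`. -/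
def SmoothFun2 (f : ℝ → ℝ → ℝ) : Prop :=
  ContDiff ℝ (⊤ : ℕ∞) (fun p : ℝ × ℝ => f p.1 p.2)

namespace Aux

variable {f : ℝ → ℝ → ℝ}

lemma line1 (x y : ℝ) : HasDerivAt (fun t : ℝ => (t, y)) ((1:ℝ), (0:ℝ)) x :=
  (hasDerivAt_id x).prodMk (hasDerivAt_const x y)

lemma line2 (x y : ℝ) : HasDerivAt (fun t : ℝ => (x, t)) ((0:ℝ), (1:ℝ)) y :=
  (hasDerivAt_const y x).prodMk (hasDerivAt_id y)

lemma hasDerivAt_slice1 (hf : SmoothFun2 f) (x y : ℝ) :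
    HasDerivAt (fun t => f t y) (pd1 f x y) x := by
  have h1 : HasDerivAt (fun t => f t y)
      (fderiv ℝ (fun p : ℝ × ℝ => f p.1 p.2) (x, y) (1, 0)) x :=
    ((hf.differentiable (by simp) (x, y)).hasFDerivAt.comp_hasDerivAt x (line1 x y) :
      HasDerivAt ((fun p : ℝ × ℝ => f p.1 p.2) ∘ fun t => (t, y)) _ x)
  have : pd1 f x y = fderiv ℝ (fun p : ℝ × ℝ => f p.1 p.2) (x, y) (1, 0) := h1.deriv
  rw [this]; exact h1

lemma hasDerivAt_slice2 (hf : SmoothFun2 f) (x y : ℝ) :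
    HasDerivAt (fun t => f x t) (pd2 f x y) y := by
  have h1 : HasDerivAt (fun t => f x t)
      (fderiv ℝ (fun p : ℝ × ℝ => f p.1 p.2) (x, y) (0, 1)) y :=
    (hf.differentiable (by simp) (x, y)).hasFDerivAt.comp_hasDerivAt y (line2 x y)
  have : pd2 f x y = fderiv ℝ (fun p : ℝ × ℝ => f p.1 p.2) (x, y) (0, 1) := h1.deriv
  rw [this]; exact h1

lemma pd1_eq_fderiv (hf : SmoothFun2 f) (x y : ℝ) :
    pd1 f x y = fderiv ℝ (fun p : ℝ × ℝ => f p.1 p.2) (x, y) (1, 0) :=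
  ((hf.differentiable (by simp) (x, y)).hasFDerivAt.comp_hasDerivAt x (line1 x y) :
    HasDerivAt ((fun p : ℝ × ℝ => f p.1 p.2) ∘ fun t => (t, y)) _ x).deriv

lemma pd2_eq_fderiv (hf : SmoothFun2 f) (x y : ℝ) :
    pd2 f x y = fderiv ℝ (fun p : ℝ × ℝ => f p.1 p.2) (x, y) (0, 1) :=
  ((hf.differentiable (by simp) (x, y)).hasFDerivAt.comp_hasDerivAt y (line2 x y)).deriv

lemma smooth_pd1 (hf : SmoothFun2 f) : SmoothFun2 (pd1 f) := by
  have : (fun p : ℝ × ℝ => pd1 f p.1 p.2)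
      = fun p : ℝ × ℝ => fderiv ℝ (fun q : ℝ × ℝ => f q.1 q.2) p (1, 0) := by
    funext p; exact pd1_eq_fderiv hf p.1 p.2
  rw [SmoothFun2, this]
  exact (hf.fderiv_right (by simp)).clm_apply contDiff_const

lemma smooth_pd2 (hf : SmoothFun2 f) : SmoothFun2 (pd2 f) := by
  have : (fun p : ℝ × ℝ => pd2 f p.1 p.2)
      = fun p : ℝ × ℝ => fderiv ℝ (fun q : ℝ × ℝ => f q.1 q.2) p (0, 1) := by
    funext p; exact pd2_eq_fderiv hf p.1 p.2
  rw [SmoothFun2, this]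
  exact (hf.fderiv_right (by simp)).clm_apply contDiff_const

lemma clairaut (hf : SmoothFun2 f) (x y : ℝ) :
    pd1 (pd2 f) x y = pd2 (pd1 f) x y := by
  set F := fun p : ℝ × ℝ => f p.1 p.2 with hF
  have hdF : ∀ p, HasFDerivAt F (fderiv ℝ F p) p := fun p =>
    (hf.differentiable (by simp) p).hasFDerivAt
  have h2 : HasFDerivAt (fderiv ℝ F) (fderiv ℝ (fderiv ℝ F) (x, y)) (x, y) :=
    ((hf.fderiv_right (m := 1) (WithTop.coe_le_coe.mpr le_top)).differentiable one_ne_zero (x, y)).hasFDerivAt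
  have hsymm := second_derivative_symmetric hdF h2 (1, 0) (0, 1)
  have e1 : pd1 (pd2 f) x y = fderiv ℝ (fderiv ℝ F) (x, y) (1, 0) (0, 1) := by
    rw [pd1_eq_fderiv (smooth_pd2 hf)]
    have : (fun p : ℝ × ℝ => pd2 f p.1 p.2) = fun p => fderiv ℝ F p (0, 1) := by
      funext p; exact pd2_eq_fderiv hf p.1 p.2
    rw [this]
    rw [fderiv_clm_apply (((hf.fderiv_right (m := 1) (WithTop.coe_le_coe.mpr le_top)).differentiable one_ne_zero) (x, y))
      (differentiableAt_const _)]
    simp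
    rfl
  have e2 : pd2 (pd1 f) x y = fderiv ℝ (fderiv ℝ F) (x, y) (0, 1) (1, 0) := by
    rw [pd2_eq_fderiv (smooth_pd1 hf)]
    have : (fun p : ℝ × ℝ => pd1 f p.1 p.2) = fun p => fderiv ℝ F p (1, 0) := by
      funext p; exact pd1_eq_fderiv hf p.1 p.2
    rw [this]
    rw [fderiv_clm_apply (((hf.fderiv_right (m := 1) (WithTop.coe_le_coe.mpr le_top)).differentiable one_ne_zero) (x, y))
      (differentiableAt_const _)]
    simp
    rfl
  rw [e1, e2, hsymm]

variable {ρ : ℝ → ℝ → ℝ}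

lemma hasDerivAt_rpow_slice1 (hρ : SmoothFun2 ρ) (hpos : ∀ x y, 0 < ρ x y) (c x y : ℝ) :
    HasDerivAt (fun t => ρ t y ^ c) (c * ρ x y ^ (c - 1) * pd1 ρ x y) x := by
  have h := (Real.hasDerivAt_rpow_const (p := c)
    (Or.inl (hpos x y).ne')).comp x (hasDerivAt_slice1 hρ x y)
  simpa [Function.comp_def] using h

lemma hasDerivAt_rpow_slice2 (hρ : SmoothFun2 ρ) (hpos : ∀ x y, 0 < ρ x y) (c x y : ℝ) :
    HasDerivAt (fun t => ρ x t ^ c) (c * ρ x y ^ (c - 1) * pd2 ρ x y) y := by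
  have h := (Real.hasDerivAt_rpow_const (p := c)
    (Or.inl (hpos x y).ne')).comp y (hasDerivAt_slice2 hρ x y)
  simpa [Function.comp_def] using h

lemma pd1_rpow (hρ : SmoothFun2 ρ) (hpos : ∀ x y, 0 < ρ x y) (c : ℝ) :
    pd1 (fun a b => ρ a b ^ c) = fun x y => c * ρ x y ^ (c - 1) * pd1 ρ x y := by
  funext x y
  exact (hasDerivAt_rpow_slice1 hρ hpos c x y).deriv

lemma pd2_rpow (hρ : SmoothFun2 ρ) (hpos : ∀ x y, 0 < ρ x y) (c : ℝ) :
    pd2 (fun a b => ρ a b ^ c) = fun x y => c * ρ x y ^ (c - 1) * pd2 ρ x y := by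
  funext x y
  exact (hasDerivAt_rpow_slice2 hρ hpos c x y).deriv

lemma rpow_succ {r : ℝ} (hr : 0 < r) (c : ℝ) : r ^ (c + 1) = r * r ^ c := by
  rw [Real.rpow_add hr, Real.rpow_one]; ring

lemma deriv_deriv_S (s : ℝ) {r0 : ℝ} (hr0 : 0 < r0) :
    deriv (deriv (fun r : ℝ => (s / 2) * r ^ (2 * s))) r0
      = s ^ 2 * (2 * s - 1) * r0 ^ (2 * s - 2) := by
  have hev : deriv (fun r : ℝ => (s / 2) * r ^ (2 * s))
      =ᶠ[nhds r0] fun r : ℝ => s ^ 2 * r ^ (2 * s - 1) := by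
    filter_upwards [eventually_ne_nhds hr0.ne'] with r hr
    rw [deriv_const_mul _ (Real.differentiableAt_rpow_const_of_ne _ hr),
      Real.deriv_rpow_const]
    ring
  rw [hev.deriv_eq, deriv_const_mul _ (Real.differentiableAt_rpow_const_of_ne _ hr0.ne'),
    Real.deriv_rpow_const]
  ring

end Aux
/-- With `σ(ρ) = ρ^s` and `S(ρ) = (s/2)ρ^(2s)` (so `S' = ρ σ'(ρ)²`), for every
smooth positive `ρ : ℝ² → (0,∞)` the pointwise identity
`ρ ∇(σ'(ρ) Δσ(ρ)) = div((ΔS(ρ) - ½ S''(ρ)|∇ρ|²) 𝕀 - ∇σ(ρ) ⊗ ∇σ(ρ))`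
holds on `ℝ²` (both components; divergence of a matrix field taken row-wise). -/
theorem stmt_13 (s : ℝ) (hs : 0 < s) (ρ : ℝ → ℝ → ℝ)
    (hρ : SmoothFun2 ρ) (hpos : ∀ x y, 0 < ρ x y) :
    ∀ x y : ℝ,
      (ρ x y *
          pd1 (fun a b =>
            deriv (fun r : ℝ => r ^ s) (ρ a b) *
              lapl (fun c d => ρ c d ^ s) a b) x y =
        pd1 (fun a b =>
            (lapl (fun c d => (s / 2) * ρ c d ^ (2 * s)) a b
              - (1 / 2) * deriv (deriv (fun r : ℝ => (s / 2) * r ^ (2 * s))) (ρ a b)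
                  * (pd1 ρ a b ^ 2 + pd2 ρ a b ^ 2))
            - pd1 (fun c d => ρ c d ^ s) a b * pd1 (fun c d => ρ c d ^ s) a b) x y
        + pd2 (fun a b =>
            -(pd1 (fun c d => ρ c d ^ s) a b * pd2 (fun c d => ρ c d ^ s) a b)) x y) ∧
      (ρ x y *
          pd2 (fun a b =>
            deriv (fun r : ℝ => r ^ s) (ρ a b) *
              lapl (fun c d => ρ c d ^ s) a b) x y =
        pd1 (fun a b =>
            -(pd2 (fun c d => ρ c d ^ s) a b * pd1 (fun c d => ρ c d ^ s) a b)) x y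
        + pd2 (fun a b =>
            (lapl (fun c d => (s / 2) * ρ c d ^ (2 * s)) a b
              - (1 / 2) * deriv (deriv (fun r : ℝ => (s / 2) * r ^ (2 * s))) (ρ a b)
                  * (pd1 ρ a b ^ 2 + pd2 ρ a b ^ 2))
            - pd2 (fun c d => ρ c d ^ s) a b * pd2 (fun c d => ρ c d ^ s) a b) x y) := by
  have hρ1 : SmoothFun2 (pd1 ρ) := Aux.smooth_pd1 hρ
  have hρ2 : SmoothFun2 (pd2 ρ) := Aux.smooth_pd2 hρ
  have hρ11 : SmoothFun2 (pd1 (pd1 ρ)) := Aux.smooth_pd1 hρ1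
  have hρ22 : SmoothFun2 (pd2 (pd2 ρ)) := Aux.smooth_pd2 hρ2
  have hσ1 : pd1 (fun c d => ρ c d ^ s)
      = fun u v => s * ρ u v ^ (s - 1) * pd1 ρ u v := Aux.pd1_rpow hρ hpos s
  have hσ2 : pd2 (fun c d => ρ c d ^ s)
      = fun u v => s * ρ u v ^ (s - 1) * pd2 ρ u v := Aux.pd2_rpow hρ hpos s
  -- Laplacian of σ(ρ) = ρ^s
  have hlapσ : ∀ u v : ℝ, lapl (fun c d => ρ c d ^ s) u v
      = s * (s - 1) * ρ u v ^ (s - 2)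
          * (pd1 ρ u v * pd1 ρ u v + pd2 ρ u v * pd2 ρ u v)
        + s * ρ u v ^ (s - 1) * (pd1 (pd1 ρ) u v + pd2 (pd2 ρ) u v) := by
    intro u v
    have e1 : pd1 (fun u v => s * ρ u v ^ (s - 1) * pd1 ρ u v) u v
        = s * (s - 1) * ρ u v ^ (s - 2) * (pd1 ρ u v * pd1 ρ u v)
          + s * ρ u v ^ (s - 1) * pd1 (pd1 ρ) u v :=
      ((((Aux.hasDerivAt_rpow_slice1 hρ hpos (s - 1) u v).const_mul s).mul
        (Aux.hasDerivAt_slice1 hρ1 u v)).deriv).trans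
        (by rw [show (s - 1 - 1 : ℝ) = s - 2 by ring]; ring)
    have e2 : pd2 (fun u v => s * ρ u v ^ (s - 1) * pd2 ρ u v) u v
        = s * (s - 1) * ρ u v ^ (s - 2) * (pd2 ρ u v * pd2 ρ u v)
          + s * ρ u v ^ (s - 1) * pd2 (pd2 ρ) u v :=
      ((((Aux.hasDerivAt_rpow_slice2 hρ hpos (s - 1) u v).const_mul s).mul
        (Aux.hasDerivAt_slice2 hρ2 u v)).deriv).trans
        (by rw [show (s - 1 - 1 : ℝ) = s - 2 by ring]; ring)
    simp only [lapl]
    rw [hσ1, hσ2, e1, e2]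
    ring
  -- normal form of σ'(ρ)·Δσ(ρ)
  have hF1 : (fun a b => deriv (fun r : ℝ => r ^ s) (ρ a b) *
        lapl (fun c d => ρ c d ^ s) a b)
      = fun u v => s ^ 2 * (s - 1) * ρ u v ^ (2 * s - 3)
            * (pd1 ρ u v * pd1 ρ u v + pd2 ρ u v * pd2 ρ u v)
          + s ^ 2 * ρ u v ^ (2 * s - 2) * (pd1 (pd1 ρ) u v + pd2 (pd2 ρ) u v) := by
    funext u v
    rw [Real.deriv_rpow_const, hlapσ u v]
    have m1 : ρ u v ^ (s - 1) * ρ u v ^ (s - 2) = ρ u v ^ (2 * s - 3) := by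
      rw [← Real.rpow_add (hpos u v), show (s - 1 + (s - 2) : ℝ) = 2 * s - 3 by ring]
    have m2 : ρ u v ^ (s - 1) * ρ u v ^ (s - 1) = ρ u v ^ (2 * s - 2) := by
      rw [← Real.rpow_add (hpos u v), show (s - 1 + (s - 1) : ℝ) = 2 * s - 2 by ring]
    rw [← m1, ← m2]; ring
  -- x-derivative of σ'(ρ)Δσ(ρ)
  have HL1 : ∀ u v : ℝ, pd1 (fun a b => deriv (fun r : ℝ => r ^ s) (ρ a b) *
        lapl (fun c d => ρ c d ^ s) a b) u v
      = s ^ 2 * (s - 1) * (2 * s - 3) * ρ u v ^ (2 * s - 4) * pd1 ρ u v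
          * (pd1 ρ u v * pd1 ρ u v + pd2 ρ u v * pd2 ρ u v)
        + s ^ 2 * (s - 1) * ρ u v ^ (2 * s - 3)
          * (2 * pd1 ρ u v * pd1 (pd1 ρ) u v + 2 * pd2 ρ u v * pd1 (pd2 ρ) u v)
        + s ^ 2 * (2 * s - 2) * ρ u v ^ (2 * s - 3) * pd1 ρ u v
          * (pd1 (pd1 ρ) u v + pd2 (pd2 ρ) u v)
        + s ^ 2 * ρ u v ^ (2 * s - 2)
          * (pd1 (pd1 (pd1 ρ)) u v + pd1 (pd2 (pd2 ρ)) u v) := by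
    intro u v
    rw [hF1]
    have Ha := ((Aux.hasDerivAt_rpow_slice1 hρ hpos (2 * s - 3) u v).const_mul
      (s ^ 2 * (s - 1))).mul
      (((Aux.hasDerivAt_slice1 hρ1 u v).mul (Aux.hasDerivAt_slice1 hρ1 u v)).add
        ((Aux.hasDerivAt_slice1 hρ2 u v).mul (Aux.hasDerivAt_slice1 hρ2 u v)))
    have Hb := ((Aux.hasDerivAt_rpow_slice1 hρ hpos (2 * s - 2) u v).const_mul
      (s ^ 2)).mul
      ((Aux.hasDerivAt_slice1 hρ11 u v).add (Aux.hasDerivAt_slice1 hρ22 u v))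
    have H := Ha.add Hb
    have x1 : (2 * s - 3 - 1 : ℝ) = 2 * s - 4 := by ring
    have x2 : (2 * s - 2 - 1 : ℝ) = 2 * s - 3 := by ring
    refine H.deriv.trans ?_
    rw [x1, x2]
    simp only [Pi.add_apply, Pi.mul_apply, Pi.sub_apply]
    ring
  -- y-derivative of σ'(ρ)Δσ(ρ)
  have HL2 : ∀ u v : ℝ, pd2 (fun a b => deriv (fun r : ℝ => r ^ s) (ρ a b) *
        lapl (fun c d => ρ c d ^ s) a b) u v
      = s ^ 2 * (s - 1) * (2 * s - 3) * ρ u v ^ (2 * s - 4) * pd2 ρ u v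
          * (pd1 ρ u v * pd1 ρ u v + pd2 ρ u v * pd2 ρ u v)
        + s ^ 2 * (s - 1) * ρ u v ^ (2 * s - 3)
          * (2 * pd1 ρ u v * pd2 (pd1 ρ) u v + 2 * pd2 ρ u v * pd2 (pd2 ρ) u v)
        + s ^ 2 * (2 * s - 2) * ρ u v ^ (2 * s - 3) * pd2 ρ u v
          * (pd1 (pd1 ρ) u v + pd2 (pd2 ρ) u v)
        + s ^ 2 * ρ u v ^ (2 * s - 2)
          * (pd2 (pd1 (pd1 ρ)) u v + pd2 (pd2 (pd2 ρ)) u v) := by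
    intro u v
    rw [hF1]
    have Ha := ((Aux.hasDerivAt_rpow_slice2 hρ hpos (2 * s - 3) u v).const_mul
      (s ^ 2 * (s - 1))).mul
      (((Aux.hasDerivAt_slice2 hρ1 u v).mul (Aux.hasDerivAt_slice2 hρ1 u v)).add
        ((Aux.hasDerivAt_slice2 hρ2 u v).mul (Aux.hasDerivAt_slice2 hρ2 u v)))
    have Hb := ((Aux.hasDerivAt_rpow_slice2 hρ hpos (2 * s - 2) u v).const_mul
      (s ^ 2)).mul
      ((Aux.hasDerivAt_slice2 hρ11 u v).add (Aux.hasDerivAt_slice2 hρ22 u v))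
    have H := Ha.add Hb
    have x1 : (2 * s - 3 - 1 : ℝ) = 2 * s - 4 := by ring
    have x2 : (2 * s - 2 - 1 : ℝ) = 2 * s - 3 := by ring
    refine H.deriv.trans ?_
    rw [x1, x2]
    simp only [Pi.add_apply, Pi.mul_apply, Pi.sub_apply]
    ring
  -- first derivatives of S(ρ)
  have hS1 : pd1 (fun c d => (s / 2) * ρ c d ^ (2 * s))
      = fun u v => s ^ 2 * ρ u v ^ (2 * s - 1) * pd1 ρ u v := by
    funext u v
    exact (((Aux.hasDerivAt_rpow_slice1 hρ hpos (2 * s) u v).const_mul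
      (s / 2)).deriv).trans (by ring)
  have hS2 : pd2 (fun c d => (s / 2) * ρ c d ^ (2 * s))
      = fun u v => s ^ 2 * ρ u v ^ (2 * s - 1) * pd2 ρ u v := by
    funext u v
    exact (((Aux.hasDerivAt_rpow_slice2 hρ hpos (2 * s) u v).const_mul
      (s / 2)).deriv).trans (by ring)
  -- Laplacian of S(ρ)
  have hlapS : ∀ u v : ℝ, lapl (fun c d => (s / 2) * ρ c d ^ (2 * s)) u v
      = s ^ 2 * (2 * s - 1) * ρ u v ^ (2 * s - 2)
          * (pd1 ρ u v * pd1 ρ u v + pd2 ρ u v * pd2 ρ u v)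
        + s ^ 2 * ρ u v ^ (2 * s - 1) * (pd1 (pd1 ρ) u v + pd2 (pd2 ρ) u v) := by
    intro u v
    have e1 : pd1 (fun u v => s ^ 2 * ρ u v ^ (2 * s - 1) * pd1 ρ u v) u v
        = s ^ 2 * (2 * s - 1) * ρ u v ^ (2 * s - 2) * (pd1 ρ u v * pd1 ρ u v)
          + s ^ 2 * ρ u v ^ (2 * s - 1) * pd1 (pd1 ρ) u v :=
      ((((Aux.hasDerivAt_rpow_slice1 hρ hpos (2 * s - 1) u v).const_mul (s ^ 2)).mul
        (Aux.hasDerivAt_slice1 hρ1 u v)).deriv).trans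
        (by rw [show (2 * s - 1 - 1 : ℝ) = 2 * s - 2 by ring]; ring)
    have e2 : pd2 (fun u v => s ^ 2 * ρ u v ^ (2 * s - 1) * pd2 ρ u v) u v
        = s ^ 2 * (2 * s - 1) * ρ u v ^ (2 * s - 2) * (pd2 ρ u v * pd2 ρ u v)
          + s ^ 2 * ρ u v ^ (2 * s - 1) * pd2 (pd2 ρ) u v :=
      ((((Aux.hasDerivAt_rpow_slice2 hρ hpos (2 * s - 1) u v).const_mul (s ^ 2)).mul
        (Aux.hasDerivAt_slice2 hρ2 u v)).deriv).trans
        (by rw [show (2 * s - 1 - 1 : ℝ) = 2 * s - 2 by ring]; ring)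
    simp only [lapl]
    rw [hS1, hS2, e1, e2]
    ring
  -- normal form of the diagonal tensor entry (ΔS - ½S''|∇ρ|²) - (∂₁σ)², x-version
  have hT11 : (fun a b =>
        (lapl (fun c d => (s / 2) * ρ c d ^ (2 * s)) a b
          - (1 / 2) * deriv (deriv (fun r : ℝ => (s / 2) * r ^ (2 * s))) (ρ a b)
              * (pd1 ρ a b ^ 2 + pd2 ρ a b ^ 2))
        - pd1 (fun c d => ρ c d ^ s) a b * pd1 (fun c d => ρ c d ^ s) a b)
      = fun u v => s ^ 2 * (2 * s - 1) / 2 * ρ u v ^ (2 * s - 2)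
            * (pd1 ρ u v * pd1 ρ u v + pd2 ρ u v * pd2 ρ u v)
          + s ^ 2 * ρ u v ^ (2 * s - 1) * (pd1 (pd1 ρ) u v + pd2 (pd2 ρ) u v)
          - s ^ 2 * ρ u v ^ (2 * s - 2) * (pd1 ρ u v * pd1 ρ u v) := by
    funext u v
    simp only [hσ1]
    rw [hlapS u v, Aux.deriv_deriv_S s (hpos u v)]
    have m2 : ρ u v ^ (s - 1) * ρ u v ^ (s - 1) = ρ u v ^ (2 * s - 2) := by
      rw [← Real.rpow_add (hpos u v), show (s - 1 + (s - 1) : ℝ) = 2 * s - 2 by ring]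
    rw [← m2]; ring
  have hT22 : (fun a b =>
        (lapl (fun c d => (s / 2) * ρ c d ^ (2 * s)) a b
          - (1 / 2) * deriv (deriv (fun r : ℝ => (s / 2) * r ^ (2 * s))) (ρ a b)
              * (pd1 ρ a b ^ 2 + pd2 ρ a b ^ 2))
        - pd2 (fun c d => ρ c d ^ s) a b * pd2 (fun c d => ρ c d ^ s) a b)
      = fun u v => s ^ 2 * (2 * s - 1) / 2 * ρ u v ^ (2 * s - 2)
            * (pd1 ρ u v * pd1 ρ u v + pd2 ρ u v * pd2 ρ u v)
          + s ^ 2 * ρ u v ^ (2 * s - 1) * (pd1 (pd1 ρ) u v + pd2 (pd2 ρ) u v)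
          - s ^ 2 * ρ u v ^ (2 * s - 2) * (pd2 ρ u v * pd2 ρ u v) := by
    funext u v
    simp only [hσ2]
    rw [hlapS u v, Aux.deriv_deriv_S s (hpos u v)]
    have m2 : ρ u v ^ (s - 1) * ρ u v ^ (s - 1) = ρ u v ^ (2 * s - 2) := by
      rw [← Real.rpow_add (hpos u v), show (s - 1 + (s - 1) : ℝ) = 2 * s - 2 by ring]
    rw [← m2]; ring
  -- off-diagonal entries
  have hT12 : (fun a b =>
        -(pd1 (fun c d => ρ c d ^ s) a b * pd2 (fun c d => ρ c d ^ s) a b))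
      = fun u v => -(s ^ 2 * ρ u v ^ (2 * s - 2) * (pd1 ρ u v * pd2 ρ u v)) := by
    funext u v
    simp only [hσ1, hσ2]
    have m2 : ρ u v ^ (s - 1) * ρ u v ^ (s - 1) = ρ u v ^ (2 * s - 2) := by
      rw [← Real.rpow_add (hpos u v), show (s - 1 + (s - 1) : ℝ) = 2 * s - 2 by ring]
    rw [← m2]; ring
  have hT21 : (fun a b =>
        -(pd2 (fun c d => ρ c d ^ s) a b * pd1 (fun c d => ρ c d ^ s) a b))
      = fun u v => -(s ^ 2 * ρ u v ^ (2 * s - 2) * (pd2 ρ u v * pd1 ρ u v)) := by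
    funext u v
    simp only [hσ1, hσ2]
    have m2 : ρ u v ^ (s - 1) * ρ u v ^ (s - 1) = ρ u v ^ (2 * s - 2) := by
      rw [← Real.rpow_add (hpos u v), show (s - 1 + (s - 1) : ℝ) = 2 * s - 2 by ring]
    rw [← m2]; ring
  -- derivatives of tensor entries
  have HR11 : ∀ u v : ℝ, pd1 (fun a b =>
        (lapl (fun c d => (s / 2) * ρ c d ^ (2 * s)) a b
          - (1 / 2) * deriv (deriv (fun r : ℝ => (s / 2) * r ^ (2 * s))) (ρ a b)
              * (pd1 ρ a b ^ 2 + pd2 ρ a b ^ 2))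
        - pd1 (fun c d => ρ c d ^ s) a b * pd1 (fun c d => ρ c d ^ s) a b) u v
      = s ^ 2 * (2 * s - 1) * (s - 1) * ρ u v ^ (2 * s - 3) * pd1 ρ u v
          * (pd1 ρ u v * pd1 ρ u v + pd2 ρ u v * pd2 ρ u v)
        + s ^ 2 * (2 * s - 1) * ρ u v ^ (2 * s - 2)
          * (pd1 ρ u v * pd1 (pd1 ρ) u v + pd2 ρ u v * pd1 (pd2 ρ) u v)
        + s ^ 2 * (2 * s - 1) * ρ u v ^ (2 * s - 2) * pd1 ρ u v
          * (pd1 (pd1 ρ) u v + pd2 (pd2 ρ) u v)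
        + s ^ 2 * ρ u v ^ (2 * s - 1)
          * (pd1 (pd1 (pd1 ρ)) u v + pd1 (pd2 (pd2 ρ)) u v)
        - s ^ 2 * (2 * s - 2) * ρ u v ^ (2 * s - 3) * pd1 ρ u v
          * (pd1 ρ u v * pd1 ρ u v)
        - 2 * s ^ 2 * ρ u v ^ (2 * s - 2) * (pd1 ρ u v * pd1 (pd1 ρ) u v) := by
    intro u v
    rw [hT11]
    have Ha := ((Aux.hasDerivAt_rpow_slice1 hρ hpos (2 * s - 2) u v).const_mul
      (s ^ 2 * (2 * s - 1) / 2)).mul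
      (((Aux.hasDerivAt_slice1 hρ1 u v).mul (Aux.hasDerivAt_slice1 hρ1 u v)).add
        ((Aux.hasDerivAt_slice1 hρ2 u v).mul (Aux.hasDerivAt_slice1 hρ2 u v)))
    have Hb := ((Aux.hasDerivAt_rpow_slice1 hρ hpos (2 * s - 1) u v).const_mul
      (s ^ 2)).mul
      ((Aux.hasDerivAt_slice1 hρ11 u v).add (Aux.hasDerivAt_slice1 hρ22 u v))
    have Hc := ((Aux.hasDerivAt_rpow_slice1 hρ hpos (2 * s - 2) u v).const_mul
      (s ^ 2)).mul
      ((Aux.hasDerivAt_slice1 hρ1 u v).mul (Aux.hasDerivAt_slice1 hρ1 u v))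
    have H := (Ha.add Hb).sub Hc
    have x1 : (2 * s - 2 - 1 : ℝ) = 2 * s - 3 := by ring
    have x2 : (2 * s - 1 - 1 : ℝ) = 2 * s - 2 := by ring
    refine H.deriv.trans ?_
    rw [x1, x2]
    simp only [Pi.add_apply, Pi.mul_apply, Pi.sub_apply]
    ring
  have HR22 : ∀ u v : ℝ, pd2 (fun a b =>
        (lapl (fun c d => (s / 2) * ρ c d ^ (2 * s)) a b
          - (1 / 2) * deriv (deriv (fun r : ℝ => (s / 2) * r ^ (2 * s))) (ρ a b)
              * (pd1 ρ a b ^ 2 + pd2 ρ a b ^ 2))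
        - pd2 (fun c d => ρ c d ^ s) a b * pd2 (fun c d => ρ c d ^ s) a b) u v
      = s ^ 2 * (2 * s - 1) * (s - 1) * ρ u v ^ (2 * s - 3) * pd2 ρ u v
          * (pd1 ρ u v * pd1 ρ u v + pd2 ρ u v * pd2 ρ u v)
        + s ^ 2 * (2 * s - 1) * ρ u v ^ (2 * s - 2)
          * (pd1 ρ u v * pd2 (pd1 ρ) u v + pd2 ρ u v * pd2 (pd2 ρ) u v)
        + s ^ 2 * (2 * s - 1) * ρ u v ^ (2 * s - 2) * pd2 ρ u v
          * (pd1 (pd1 ρ) u v + pd2 (pd2 ρ) u v)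
        + s ^ 2 * ρ u v ^ (2 * s - 1)
          * (pd2 (pd1 (pd1 ρ)) u v + pd2 (pd2 (pd2 ρ)) u v)
        - s ^ 2 * (2 * s - 2) * ρ u v ^ (2 * s - 3) * pd2 ρ u v
          * (pd2 ρ u v * pd2 ρ u v)
        - 2 * s ^ 2 * ρ u v ^ (2 * s - 2) * (pd2 ρ u v * pd2 (pd2 ρ) u v) := by
    intro u v
    rw [hT22]
    have Ha := ((Aux.hasDerivAt_rpow_slice2 hρ hpos (2 * s - 2) u v).const_mul
      (s ^ 2 * (2 * s - 1) / 2)).mul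
      (((Aux.hasDerivAt_slice2 hρ1 u v).mul (Aux.hasDerivAt_slice2 hρ1 u v)).add
        ((Aux.hasDerivAt_slice2 hρ2 u v).mul (Aux.hasDerivAt_slice2 hρ2 u v)))
    have Hb := ((Aux.hasDerivAt_rpow_slice2 hρ hpos (2 * s - 1) u v).const_mul
      (s ^ 2)).mul
      ((Aux.hasDerivAt_slice2 hρ11 u v).add (Aux.hasDerivAt_slice2 hρ22 u v))
    have Hc := ((Aux.hasDerivAt_rpow_slice2 hρ hpos (2 * s - 2) u v).const_mul
      (s ^ 2)).mul
      ((Aux.hasDerivAt_slice2 hρ2 u v).mul (Aux.hasDerivAt_slice2 hρ2 u v))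
    have H := (Ha.add Hb).sub Hc
    have x1 : (2 * s - 2 - 1 : ℝ) = 2 * s - 3 := by ring
    have x2 : (2 * s - 1 - 1 : ℝ) = 2 * s - 2 := by ring
    refine H.deriv.trans ?_
    rw [x1, x2]
    simp only [Pi.add_apply, Pi.mul_apply, Pi.sub_apply]
    ring
  have HR12 : ∀ u v : ℝ, pd2 (fun a b =>
        -(pd1 (fun c d => ρ c d ^ s) a b * pd2 (fun c d => ρ c d ^ s) a b)) u v
      = -(s ^ 2 * (2 * s - 2) * ρ u v ^ (2 * s - 3) * pd2 ρ u v
            * (pd1 ρ u v * pd2 ρ u v)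
          + s ^ 2 * ρ u v ^ (2 * s - 2)
            * (pd2 (pd1 ρ) u v * pd2 ρ u v + pd1 ρ u v * pd2 (pd2 ρ) u v)) := by
    intro u v
    rw [hT12]
    have H := (((Aux.hasDerivAt_rpow_slice2 hρ hpos (2 * s - 2) u v).const_mul
      (s ^ 2)).mul
      ((Aux.hasDerivAt_slice2 hρ1 u v).mul (Aux.hasDerivAt_slice2 hρ2 u v))).neg
    have x1 : (2 * s - 2 - 1 : ℝ) = 2 * s - 3 := by ring
    refine H.deriv.trans ?_
    rw [x1]
    simp only [Pi.mul_apply]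
    ring
  have HR21 : ∀ u v : ℝ, pd1 (fun a b =>
        -(pd2 (fun c d => ρ c d ^ s) a b * pd1 (fun c d => ρ c d ^ s) a b)) u v
      = -(s ^ 2 * (2 * s - 2) * ρ u v ^ (2 * s - 3) * pd1 ρ u v
            * (pd2 ρ u v * pd1 ρ u v)
          + s ^ 2 * ρ u v ^ (2 * s - 2)
            * (pd1 (pd2 ρ) u v * pd1 ρ u v + pd2 ρ u v * pd1 (pd1 ρ) u v)) := by
    intro u v
    rw [hT21]
    have H := (((Aux.hasDerivAt_rpow_slice1 hρ hpos (2 * s - 2) u v).const_mul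
      (s ^ 2)).mul
      ((Aux.hasDerivAt_slice1 hρ2 u v).mul (Aux.hasDerivAt_slice1 hρ1 u v))).neg
    have x1 : (2 * s - 2 - 1 : ℝ) = 2 * s - 3 := by ring
    refine H.deriv.trans ?_
    rw [x1]
    simp only [Pi.mul_apply]
    ring
  -- final assembly
  intro x y
  have l1 : ρ x y ^ (2 * s - 3) = ρ x y * ρ x y ^ (2 * s - 4) := by
    rw [show (2 * s - 3 : ℝ) = 2 * s - 4 + 1 by ring]
    exact Aux.rpow_succ (hpos x y) _
  have l2 : ρ x y ^ (2 * s - 2) = ρ x y * ρ x y ^ (2 * s - 3) := by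
    rw [show (2 * s - 2 : ℝ) = 2 * s - 3 + 1 by ring]
    exact Aux.rpow_succ (hpos x y) _
  have l3 : ρ x y ^ (2 * s - 1) = ρ x y * ρ x y ^ (2 * s - 2) := by
    rw [show (2 * s - 1 : ℝ) = 2 * s - 2 + 1 by ring]
    exact Aux.rpow_succ (hpos x y) _
  constructor
  · rw [HL1 x y, HR11 x y, HR12 x y, l3, l2, l1, ← Aux.clairaut hρ x y]
    ring
  · rw [HL2 x y, HR21 x y, HR22 x y, l3, l2, l1, ← Aux.clairaut hρ x y]
    ring
end
end
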